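/- Strong apartness is the complement of strong bisimilarity: for all states p, q, p #_s q if and only if it is not the case that p ~_s q. -/

import Mathlib

variable {X A : Type*}

/-- `Q` is a strong apartness relation. -/
def IsSApartRel (step : A → X → X → Prop) (Q : X → X → Prop) : Prop :=
  (∀ p q, Q p q → Q q p) ∧
  ∀ (a : A) (p p' q : X), step a p p' → (∀ q', step a q q' → Q p' q') → Q p q

/-- `p` and `q` are strongly apart: every strong apartness relates them. -/
def SApart (step : A → X → X → Prop) (p q : X) : Prop :=
  ∀ Q : X → X → Prop, IsSApartRel step Q → Q p q

/-- `R` is a strong bisimulation. -/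
def IsSBisim (step : A → X → X → Prop) (R : X → X → Prop) : Prop :=
  (∀ p q, R p q → R q p) ∧
  ∀ (a : A) (p p' q : X), R p q → step a p p' → ∃ q', step a q q' ∧ R p' q'

/-- Strong bisimilarity. -/
def SBisim (step : A → X → X → Prop) (p q : X) : Prop :=
  ∃ R : X → X → Prop, IsSBisim step R ∧ R p q

/-! Contraposition turns the apartness closure condition into the bisimulation transfer condition,
so `Q` is a strong apartness exactly when its complement is a strong bisimulation. Bisimilarity is
the largest bisimulation, hence its complement is the least apartness, which is `SApart`. -/

section

variable {step : A → X → X → Prop}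

theorem isSApartRel_iff_isSBisim_compl {Q : X → X → Prop} :
    IsSApartRel step Q ↔ IsSBisim step fun p q => ¬ Q p q := by
  refine and_congr ⟨fun h p q hpq hqp => hpq (h q p hqp),
    fun h p q hpq => not_not.1 fun hqp => h q p hqp hpq⟩ ?_
  refine forall₄_congr fun a p p' q => ?_
  simp only [← not_forall_not (p := fun q' => step a q q' ∧ _), not_and, not_not]
  exact ⟨fun h hpq hp => hpq ∘ h hp, fun h hp hall => not_not.1 fun hpq => h hpq hp hall⟩

theorem isSBisim_sBisim : IsSBisim step (SBisim step) :=
  ⟨fun _ _ ⟨R, hR, hpq⟩ => ⟨R, hR, hR.1 _ _ hpq⟩,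
   fun a p p' q ⟨R, hR, hpq⟩ hp => (hR.2 a p p' q hpq hp).imp fun _ ⟨hq, hR'⟩ => ⟨hq, R, hR, hR'⟩⟩

theorem isSApartRel_not_sBisim : IsSApartRel step fun p q => ¬ SBisim step p q := by
  simpa only [isSApartRel_iff_isSBisim_compl, not_not] using isSBisim_sBisim

end

theorem sApart_iff_not_sBisim (step : A → X → X → Prop) (p q : X) :
    SApart step p q ↔ ¬ SBisim step p q :=
  ⟨fun h => h _ isSApartRel_not_sBisim,
   fun h _ hQ => not_not.1 fun hpq => h ⟨_, isSApartRel_iff_isSBisim_compl.1 hQ, hpq⟩⟩
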